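/- arXiv:2309.02062 — 2 statements merged into one kernel-verified Lean document; each statement's English description precedes it below -/
import Mathlib

section
/- Every inclusion-wise maximal interval-order subgraph H of a graph G = (V,E) equals G^σ for some linear ordering σ of V, where G^σ is defined by the prefix-intersection construction. -/
open SimpleGraph

/-- `G` is an interval graph: the intersection graph of a family of closed intervals. -/
def IsIntervalGraph {V : Type*} (G : SimpleGraph V) : Prop :=
  ∃ lo hi : V → ℝ, (∀ v, lo v ≤ hi v) ∧ ∀ u v : V, u ≠ v →
    (G.Adj u v ↔ (Set.Icc (lo u) (hi u) ∩ Set.Icc (lo v) (hi v)).Nonempty)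

/-- `G` is the intersection graph of axis-parallel boxes in `ℝ^d`. -/
def HasBoxRep {V : Type*} (G : SimpleGraph V) (d : ℕ) : Prop :=
  ∃ lo hi : V → Fin d → ℝ, (∀ v i, lo v i ≤ hi v i) ∧
    ∀ u v : V, u ≠ v →
      (G.Adj u v ↔ ∀ i, (Set.Icc (lo u i) (hi u i) ∩ Set.Icc (lo v i) (hi v i)).Nonempty)

/-- The boxicity of a graph. -/
noncomputable def boxicity {V : Type*} (G : SimpleGraph V) : ℕ := sInf {d | HasBoxRep G d}

/-- The Kneser graph `KG(n,2)`. -/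
def kneser2 (n : ℕ) : SimpleGraph {s : Finset (Fin n) // s.card = 2} where
  Adj a b := Disjoint a.1 b.1
  symm := ⟨fun a b h => h.symm⟩
  loopless := ⟨fun a h => by
    have h2 := a.2
    simp only [disjoint_self, Finset.bot_eq_empty] at h
    rw [h] at h2
    simp at h2⟩

/-- The out-neighborhood of `σ i` for a linear ordering `σ` of the vertices. -/
def Nplus {V : Type*} (G : SimpleGraph V) {n : ℕ} (σ : Fin n ≃ V) (i : Fin n) : Set V :=
  {v | ∃ m : Fin n, i < m ∧ v = σ m ∧ G.Adj (σ i) (σ m)}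

/-- `Vset G σ i` is the set `V_i` from the prefix-intersection construction:
common neighbors of `σ 0, …, σ i`. -/
def Vset {V : Type*} (G : SimpleGraph V) {n : ℕ} (σ : Fin n ≃ V) (i : Fin n) : Set V :=
  {w | ∀ j : Fin n, j ≤ i → G.Adj (σ j) w}

/-- The graph `G^σ` from the prefix-intersection construction. -/
def Gsigma {V : Type*} (G : SimpleGraph V) {n : ℕ} (σ : Fin n ≃ V) : SimpleGraph V :=
  SimpleGraph.fromRel (fun u v => ∃ i : Fin n, u = σ i ∧ v ∈ Vset G σ i)

/-! An interval order is a graph in which `u ~ v` iff the interval of `u` lies strictly to one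
side of the interval of `v`. Sort the vertices of a maximal interval-order subgraph `H` of `G` by
right endpoints, obtaining `σ`. If `hi u < lo v`, every vertex preceding `u` in `σ` has its
interval entirely left of `v`'s, hence is `H`-adjacent to `v`; so `v ∈ V_u` and `H ≤ G^σ`.
Conversely `G^σ ≤ G` is always an interval order: `σ b` is `G^σ`-adjacent to exactly those earlier
`σ a` with `a < t b`, where `t b = firstNonAdj G σ b` is the first position of a
`G`-non-neighbour of `σ b`, so the intervals `[t b, b]` represent its complement. Maximality of `H` forces `H = G^σ`. -/

theorem Set.Icc_inter_Icc_nonempty_iff {α : Type*} [LinearOrder α] {a b c d : α}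
    (hab : a ≤ b) (hcd : c ≤ d) : (Icc a b ∩ Icc c d).Nonempty ↔ a ≤ d ∧ c ≤ b := by
  simp only [Icc_inter_Icc, nonempty_Icc, sup_le_iff, le_inf_iff]
  tauto

theorem isIntervalGraph_compl_iff {V : Type*} {G : SimpleGraph V} :
    IsIntervalGraph Gᶜ ↔ ∃ lo hi : V → ℝ, (∀ v, lo v ≤ hi v) ∧
      ∀ u v, u ≠ v → (G.Adj u v ↔ hi u < lo v ∨ hi v < lo u) := by
  refine exists₂_congr fun lo hi => and_congr_right fun hlh => forall₂_congr fun u v => ?_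
  refine imp_congr_right fun huv => ?_
  rw [compl_adj, Set.Icc_inter_Icc_nonempty_iff (hlh u) (hlh v)]
  simp only [ne_eq, huv, not_false_eq_true, true_and, ← not_lt]
  tauto

theorem exists_equiv_fin_monotone {V α : Type*} [Fintype V] [LinearOrder α] (f : V → α) :
    ∃ σ : Fin (Fintype.card V) ≃ V, Monotone (f ∘ σ) :=
  let e := (Fintype.equivFin V).symm
  ⟨(Tuple.sort (f ∘ e)).trans e, Tuple.monotone_sort (f ∘ e)⟩

section Gsigma

variable {V : Type*} (G : SimpleGraph V) {n : ℕ} (σ : Fin n ≃ V)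

theorem gsigma_le : Gsigma G σ ≤ G := by
  rintro u v ⟨-, ⟨i, rfl, hv⟩ | ⟨i, rfl, hu⟩⟩
  · exact hv i le_rfl
  · exact (hu i le_rfl).symm

variable {G σ} in
theorem gsigma_adj_of_mem_vset {i : Fin n} {v : V} (hv : v ∈ Vset G σ i) :
    (Gsigma G σ).Adj (σ i) v :=
  ⟨(hv i le_rfl).ne, Or.inl ⟨i, rfl, hv⟩⟩

noncomputable def firstNonAdj (b : Fin n) : Fin n :=
  open Classical in (Finset.univ.filter fun j => ¬ G.Adj (σ j) (σ b)).min' ⟨b, by simp⟩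

theorem firstNonAdj_le (b : Fin n) : firstNonAdj G σ b ≤ b :=
  Finset.min'_le _ _ (by simp)

theorem mem_vset_iff_lt_firstNonAdj (a b : Fin n) :
    σ b ∈ Vset G σ a ↔ a < firstNonAdj G σ b := by
  classical
  have hmin := Finset.min'_mem (Finset.univ.filter fun j => ¬ G.Adj (σ j) (σ b)) ⟨b, by simp⟩
  constructor
  · intro h
    by_contra! hle
    exact (Finset.mem_filter.mp hmin).2 (h _ hle)
  · intro h j hj
    by_contra hna
    exact absurd (Finset.min'_le _ j (by simpa using hna)) (not_le.mpr (hj.trans_lt h))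

theorem gsigma_adj_iff {a b : Fin n} (hab : a ≠ b) :
    (Gsigma G σ).Adj (σ a) (σ b) ↔ a < firstNonAdj G σ b ∨ b < firstNonAdj G σ a := by
  simp only [Gsigma, fromRel_adj, ne_eq, σ.apply_eq_iff_eq, hab, not_false_eq_true, true_and,
    exists_eq_left', mem_vset_iff_lt_firstNonAdj]

theorem isIntervalGraph_compl_gsigma : IsIntervalGraph (Gsigma G σ)ᶜ := by
  refine isIntervalGraph_compl_iff.mpr
    ⟨fun v => (firstNonAdj G σ (σ.symm v) : ℕ), fun v => (σ.symm v : ℕ),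
      fun v => Nat.cast_le.mpr (firstNonAdj_le G σ _), fun u v huv => ?_⟩
  rw [← σ.apply_symm_apply u, ← σ.apply_symm_apply v,
    gsigma_adj_iff G σ (σ.symm.injective.ne huv)]
  simp only [Equiv.symm_apply_apply, Nat.cast_lt, Fin.val_fin_lt]

end Gsigma

theorem le_gsigma_of_monotone {V : Type*} {G H : SimpleGraph V} {n : ℕ} {σ : Fin n ≃ V}
    {lo hi : V → ℝ} (hlh : ∀ v, lo v ≤ hi v)
    (hH : ∀ u v, u ≠ v → (H.Adj u v ↔ hi u < lo v ∨ hi v < lo u))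
    (hsub : H ≤ G) (hσ : Monotone (hi ∘ σ)) : H ≤ Gsigma G σ := by
  have hleft : ∀ u v, hi u < lo v → (Gsigma G σ).Adj u v := by
    intro u v huv
    obtain ⟨i, rfl⟩ := σ.surjective u
    refine gsigma_adj_of_mem_vset fun j hj => hsub ?_
    have hj_lt : hi (σ j) < lo v := (hσ hj).trans_lt huv
    have hj_ne : σ j ≠ v := fun h => (h ▸ hj_lt).not_ge (hlh v)
    exact (hH _ _ hj_ne).mpr (Or.inl hj_lt)
  intro u v h
  rcases (hH u v h.ne).mp h with huv | hvu
  · exact hleft u v huv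
  · exact (hleft v u hvu).symm

/-- Every inclusion-wise maximal interval-order subgraph of `G` is `G^σ` for some ordering. -/
theorem maximal_interval_order_eq_Gsigma {V : Type*} [Fintype V] (G H : SimpleGraph V)
    (hsub : H ≤ G) (hio : IsIntervalGraph Hᶜ)
    (hmax : ∀ H', H' ≤ G → IsIntervalGraph H'ᶜ → H ≤ H' → H' = H) :
    ∃ σ : Fin (Fintype.card V) ≃ V, H = Gsigma G σ := by
  obtain ⟨lo, hi, hlh, hH⟩ := isIntervalGraph_compl_iff.mp hio
  obtain ⟨σ, hσ⟩ := exists_equiv_fin_monotone hi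
  exact ⟨σ, (hmax _ (gsigma_le G σ) (isIntervalGraph_compl_gsigma G σ)
    (le_gsigma_of_monotone hlh hH hsub hσ)).symm⟩
end

section
/- For n ≥ 5 and distinct vertices a,b,c,d of K_n, the subgraph of L(K_n) with edge set F_{a,b,c,d} = δ_{ab} ∪ δ_{ad} ∪ δ_{ac^-} ∪ K_{{a,b,c}} ∪ K_{{a,b,d}} ∪ K_{a,d,c^-} ∪ K_{b,c,d^-} is an interval-order graph with exactly 5(n-2) edges. -/
open SimpleGraph

/-- The clique `Q_v` in `L(K_n)` on the edges incident to `v`. -/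
def Qv {n : ℕ} (a : Fin n) : SimpleGraph {s : Finset (Fin n) // s.card = 2} :=
  SimpleGraph.fromRel (fun e f => a ∈ e.1 ∧ a ∈ f.1)

/-- The star `δ_{uv}` of the vertex `uv` in `L(K_n)`. -/
def Dstar {n : ℕ} (u v : Fin n) : SimpleGraph {s : Finset (Fin n) // s.card = 2} :=
  SimpleGraph.fromRel (fun e f => e.1 = {u, v} ∧ ¬ Disjoint e.1 f.1)

/-- The half-star `δ_{uv⁻}`: edges from `uv` to edges of `K_n` incident to `u`. -/
def DstarHalf {n : ℕ} (u v : Fin n) : SimpleGraph {s : Finset (Fin n) // s.card = 2} :=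
  SimpleGraph.fromRel (fun e f => e.1 = {u, v} ∧ u ∈ f.1)

/-- `K_U`: the edge set of `L(K_n[U])`. -/
def KU {n : ℕ} (U : Finset (Fin n)) : SimpleGraph {s : Finset (Fin n) // s.card = 2} :=
  SimpleGraph.fromRel (fun e f => e.1 ⊆ U ∧ f.1 ⊆ U ∧ ¬ Disjoint e.1 f.1)

/-- `K_{u,v,w⁻} = {(uv,uw), (uv,vw)}`. -/
def Kminus {n : ℕ} (u v w : Fin n) : SimpleGraph {s : Finset (Fin n) // s.card = 2} :=
  SimpleGraph.fromRel (fun e f => e.1 = {u, v} ∧ (f.1 = {u, w} ∨ f.1 = {v, w}))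

/-! Adjacency in `F_{a,b,c,d}` between two vertices `e, f` of `L(K_n)` depends only on which of
`a, b, c, d` lie on `e` and on `f`, so both claims reduce to finite checks over these profiles.
The complement is represented by intervals indexed by the profile. For the count, `F` is the
edge-disjoint union of the stars centred at `ab`, `ad`, `ac`, `bc`, with `2(n-2)`, `2(n-2) - 1`,
`n - 3` and `2` leaves respectively. -/

open Finset

namespace SimpleGraph

variable {V : Type*}

def starOn (v : V) (T : Set V) : SimpleGraph V := fromRel fun x y => x = v ∧ y ∈ T

variable {v w : V} {T T' : Set V}

lemma starOn_adj {x y : V} :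
    (starOn v T).Adj x y ↔ x ≠ y ∧ (x = v ∧ y ∈ T ∨ y = v ∧ x ∈ T) :=
  fromRel_adj ..

lemma edgeSet_starOn (hv : v ∉ T) : (starOn v T).edgeSet = (fun w => s(v, w)) '' T := by
  ext ⟨x, y⟩
  simp only [mem_edgeSet, starOn_adj, Set.mem_image, Sym2.eq_iff]
  constructor
  · rintro ⟨-, ⟨rfl, hy⟩ | ⟨rfl, hx⟩⟩
    · exact ⟨y, hy, .inl ⟨rfl, rfl⟩⟩
    · exact ⟨x, hx, .inr ⟨rfl, rfl⟩⟩
  · rintro ⟨w, hw, ⟨rfl, rfl⟩ | ⟨rfl, rfl⟩⟩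
    · exact ⟨fun h => hv (h ▸ hw), .inl ⟨rfl, hw⟩⟩
    · exact ⟨fun h => hv (h ▸ hw), .inr ⟨rfl, hw⟩⟩

lemma ncard_edgeSet_starOn (hv : v ∉ T) : (starOn v T).edgeSet.ncard = T.ncard := by
  rw [edgeSet_starOn hv, Set.ncard_image_of_injective _ fun _ _ => Sym2.congr_right.1]

lemma disjoint_edgeSet_starOn (hvw : v ≠ w) (hv : v ∉ T') :
    Disjoint (starOn v T).edgeSet (starOn w T').edgeSet := by
  rw [Set.disjoint_left]
  rintro ⟨x, y⟩ h h'
  simp only [mem_edgeSet, starOn_adj] at h h'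
  grind

lemma ncard_edgeSet_sup_of_disjoint [Finite V] {G H : SimpleGraph V}
    (h : Disjoint G.edgeSet H.edgeSet) :
    (G ⊔ H).edgeSet.ncard = G.edgeSet.ncard + H.edgeSet.ncard := by
  rw [edgeSet_sup, Set.ncard_union_eq h]

end SimpleGraph

lemma isIntervalGraph_of_nat {V : Type*} {G : SimpleGraph V} (lo hi : V → ℕ)
    (hle : ∀ v, lo v ≤ hi v) (hadj : ∀ u v, u ≠ v → (G.Adj u v ↔ lo u ≤ hi v ∧ lo v ≤ hi u)) :
    IsIntervalGraph G := by
  refine ⟨fun v => lo v, fun v => hi v, fun v => Nat.cast_le.2 (hle v), fun u v huv => ?_⟩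
  rw [hadj u v huv, Set.Icc_inter_Icc, Set.nonempty_Icc, max_le_iff, le_min_iff, le_min_iff]
  simp only [Nat.cast_le]
  constructor
  · exact fun ⟨h₁, h₂⟩ => ⟨⟨hle u, h₁⟩, h₂, hle v⟩
  · exact fun ⟨⟨_, h₁⟩, h₂, _⟩ => ⟨h₁, h₂⟩

namespace Finset

variable {α : Type*} [DecidableEq α] {s : Finset α} {x y z : α}

lemma eq_pair_iff_of_card_eq_two (hs : #s = 2) (hxy : x ≠ y) : s = {x, y} ↔ x ∈ s ∧ y ∈ s := by
  refine ⟨fun h => by simp [h], fun ⟨hx, hy⟩ => ?_⟩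
  exact (eq_of_subset_of_card_le (by simp [insert_subset_iff, hx, hy])
    (by rw [hs, card_pair hxy])).symm

lemma subset_triple_iff_of_card_eq_two (hs : #s = 2) (hxy : x ≠ y) (hxz : x ≠ z) (hyz : y ≠ z) :
    s ⊆ {x, y, z} ↔ x ∈ s ∧ y ∈ s ∨ x ∈ s ∧ z ∈ s ∨ y ∈ s ∧ z ∈ s := by
  obtain ⟨u, v, huv, rfl⟩ := card_eq_two.1 hs
  simp only [insert_subset_iff, mem_insert, mem_singleton, singleton_subset_iff]
  grind

end Finset

section LineGraph

variable {n : ℕ} {u v w : Fin n} {e f : {s : Finset (Fin n) // s.card = 2}}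

lemma val_eq_pair_iff (huv : u ≠ v) : e.1 = {u, v} ↔ u ∈ e.1 ∧ v ∈ e.1 :=
  eq_pair_iff_of_card_eq_two e.2 huv

def pairsThrough (u : Fin n) : Set {s : Finset (Fin n) // s.card = 2} := {e | u ∈ e.1}

@[simp] lemma mem_pairsThrough : e ∈ pairsThrough u ↔ u ∈ e.1 := Iff.rfl

lemma ncard_pairsThrough (u : Fin n) : (pairsThrough u).ncard = n - 1 := by
  have : ({u}ᶜ : Set (Fin n)).ncard = (pairsThrough u).ncard := by
    refine Set.ncard_congr (fun x hx => ⟨{u, x}, card_pair (Ne.symm hx)⟩) (by simp) ?_ ?_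
    · intro x y hx _ h
      have hxy : x ∈ ({u, y} : Finset (Fin n)) := by rw [← Subtype.mk.inj h]; simp
      simp only [mem_insert, mem_singleton] at hxy
      exact hxy.resolve_left hx
    · rintro ⟨e, he⟩ (hu : u ∈ e)
      obtain ⟨x, y, hxy, rfl⟩ := card_eq_two.1 he
      simp only [mem_insert, mem_singleton] at hu
      rcases hu with rfl | rfl
      · exact ⟨y, hxy.symm, rfl⟩
      · exact ⟨x, hxy, Subtype.ext (pair_comm _ _)⟩
  rw [← this, Set.ncard_compl, Set.ncard_singleton, Nat.card_eq_fintype_card, Fintype.card_fin]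

lemma ncard_pairsThrough_union (huv : u ≠ v) :
    (pairsThrough u ∪ pairsThrough v).ncard = 2 * n - 3 := by
  have hinter : pairsThrough u ∩ pairsThrough v = {⟨{u, v}, card_pair huv⟩} := by
    ext e
    simp [Subtype.ext_iff, val_eq_pair_iff huv]
  have := Set.ncard_union_add_ncard_inter (pairsThrough u) (pairsThrough v)
  rw [hinter, Set.ncard_singleton, ncard_pairsThrough, ncard_pairsThrough] at this
  omega

lemma dstar_adj_iff (huv : u ≠ v) : (Dstar u v).Adj e f ↔ e ≠ f ∧
    (u ∈ e.1 ∧ v ∈ e.1 ∧ (u ∈ f.1 ∨ v ∈ f.1) ∨ u ∈ f.1 ∧ v ∈ f.1 ∧ (u ∈ e.1 ∨ v ∈ e.1)) := by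
  have hrel : ∀ e f : {s : Finset (Fin n) // s.card = 2}, e.1 = {u, v} ∧ ¬Disjoint e.1 f.1 ↔
      u ∈ e.1 ∧ v ∈ e.1 ∧ (u ∈ f.1 ∨ v ∈ f.1) := fun e f => by
    rw [← and_assoc, ← val_eq_pair_iff huv]
    exact and_congr_right fun h => by
      rw [h]
      simp [disjoint_insert_left, or_iff_not_imp_left]
  simp only [Dstar, fromRel_adj, hrel]

lemma dstarHalf_adj_iff (huv : u ≠ v) : (DstarHalf u v).Adj e f ↔ e ≠ f ∧
    (u ∈ e.1 ∧ v ∈ e.1 ∧ u ∈ f.1 ∨ u ∈ f.1 ∧ v ∈ f.1 ∧ u ∈ e.1) := by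
  simp only [DstarHalf, fromRel_adj, val_eq_pair_iff huv, and_assoc]

lemma kminus_adj_iff (huv : u ≠ v) (huw : u ≠ w) (hvw : v ≠ w) : (Kminus u v w).Adj e f ↔
    e ≠ f ∧ (u ∈ e.1 ∧ v ∈ e.1 ∧ (u ∈ f.1 ∧ w ∈ f.1 ∨ v ∈ f.1 ∧ w ∈ f.1) ∨
      u ∈ f.1 ∧ v ∈ f.1 ∧ (u ∈ e.1 ∧ w ∈ e.1 ∨ v ∈ e.1 ∧ w ∈ e.1)) := by
  simp only [Kminus, fromRel_adj, val_eq_pair_iff huv, val_eq_pair_iff huw,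
    val_eq_pair_iff hvw, and_assoc]

lemma ku_adj_iff {U : Finset (Fin n)} (hU : #U ≤ 3) :
    (KU U).Adj e f ↔ e ≠ f ∧ e.1 ⊆ U ∧ f.1 ⊆ U := by
  have meet : e.1 ⊆ U → f.1 ⊆ U → ¬Disjoint e.1 f.1 := fun he hf => by
    rw [not_disjoint_iff_nonempty_inter]
    exact inter_nonempty_of_card_lt_card_add_card he hf (by rw [e.2, f.2]; omega)
  simp only [KU, fromRel_adj]
  grind

end LineGraph

def typeCGraph {n : ℕ} (a b c d : Fin n) : SimpleGraph {s : Finset (Fin n) // s.card = 2} :=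
  Dstar a b ⊔ Dstar a d ⊔ DstarHalf a c ⊔ KU {a, b, c} ⊔ KU {a, b, d} ⊔ Kminus a d c ⊔ Kminus b c d

section Profile

variable {n : ℕ} (p : Fin 4 ↪ Fin n) {e f : {s : Finset (Fin n) // s.card = 2}}

def profile (e : {s : Finset (Fin n) // s.card = 2}) : Finset (Fin 4) := {i | p i ∈ e.1}

@[simp] lemma mem_profile {i : Fin 4} : i ∈ profile p e ↔ p i ∈ e.1 := by simp [profile]

lemma card_profile_le : #(profile p e) ≤ 2 := by
  rw [← e.2, ← card_map p]
  exact card_le_card fun x => by simp +contextual [profile, eq_comm]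

lemma eq_of_profile_eq (he : #(profile p e) = 2) (h : profile p e = profile p f) : e = f := by
  obtain ⟨i, j, hij, hije⟩ := card_eq_two.1 he
  have hpij := p.injective.ne hij
  refine Subtype.ext <| ((val_eq_pair_iff hpij).2 ?_).trans ((val_eq_pair_iff hpij).2 ?_).symm
  · simp [← mem_profile, hije]
  · simp [← mem_profile, ← h, hije]

lemma profile_constraints (hef : e ≠ f) : #(profile p e) ≤ 2 ∧ #(profile p f) ≤ 2 ∧
    ¬(profile p e = profile p f ∧ #(profile p e) = 2) :=
  ⟨card_profile_le p, card_profile_le p, fun h => hef (eq_of_profile_eq p h.2 h.1)⟩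

def pairVertex (i j : Fin 4) (hij : i ≠ j := by decide) : {s : Finset (Fin n) // s.card = 2} :=
  ⟨{p i, p j}, card_pair (p.injective.ne hij)⟩

@[simp] lemma pairVertex_val {i j : Fin 4} (hij : i ≠ j) :
    (pairVertex p i j hij).1 = {p i, p j} :=
  rfl

lemma eq_pairVertex_iff {i j : Fin 4} (hij : i ≠ j) :
    e = pairVertex p i j hij ↔ i ∈ profile p e ∧ j ∈ profile p e := by
  rw [Subtype.ext_iff, mem_profile, mem_profile]
  exact val_eq_pair_iff (p.injective.ne hij)

lemma pairVertex_inj {i j k l : Fin 4} (hij : i ≠ j) (hkl : k ≠ l) :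
    pairVertex p i j hij = pairVertex p k l hkl ↔ ({i, j} : Finset (Fin 4)) = {k, l} := by
  have hmap : ∀ i j : Fin 4, ({p i, p j} : Finset (Fin n)) = ({i, j} : Finset (Fin 4)).map p := by
    simp
  rw [pairVertex, pairVertex, Subtype.mk.injEq, hmap, hmap, map_inj]

end Profile

/-- `IsTypeCLeaf s t`: the edge of profile `t` is a leaf of the star of `F_{a,b,c,d}` centred at
the edge of profile `s`; indices `0, 1, 2, 3` stand for `a, b, c, d`. -/
def IsTypeCLeaf (s t : Finset (Fin 4)) : Prop :=
  s = {0, 1} ∧ (0 ∈ t ∨ 1 ∈ t) ∨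
  s = {0, 3} ∧ (0 ∈ t ∨ 3 ∈ t) ∧ t ≠ {0, 1} ∨
  s = {0, 2} ∧ (0 ∈ t ∧ t ≠ {0, 1} ∧ t ≠ {0, 3} ∨ t = {1, 2}) ∨
  s = {1, 2} ∧ (t = {1, 3} ∨ t = {2, 3})

instance : DecidableRel IsTypeCLeaf := fun s t => by unfold IsTypeCLeaf; infer_instance

def intervalLo (s : Finset (Fin 4)) : ℕ :=
  if s = {0, 3} then 4 else if s = {1, 2} then 3 else if s = {0} then 2
  else if s = {0, 2} ∨ s = {1, 3} ∨ s = {1} then 1 else 0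

def intervalHi (s : Finset (Fin 4)) : ℕ :=
  if s = {0, 1} then 0 else if s = {0, 2} then 1 else if s = {1, 3} ∨ s = {2, 3} then 2
  else if s = {0} ∨ s = {3} then 3 else 4

lemma intervalLo_le_intervalHi : ∀ s, intervalLo s ≤ intervalHi s := by decide

lemma not_isTypeCLeaf_iff_intervals_meet : ∀ s t : Finset (Fin 4), #s ≤ 2 → #t ≤ 2 →
    ¬(s = t ∧ #s = 2) → (¬(IsTypeCLeaf s t ∨ IsTypeCLeaf t s) ↔
      intervalLo s ≤ intervalHi t ∧ intervalLo t ≤ intervalHi s) := by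
  decide

section TypeC

variable {n : ℕ} (p : Fin 4 ↪ Fin n) {e f : {s : Finset (Fin n) // s.card = 2}}

set_option synthInstance.maxSize 1000 in
lemma typeCGraph_adj_iff : (typeCGraph (p 0) (p 1) (p 2) (p 3)).Adj e f ↔
    e ≠ f ∧ (IsTypeCLeaf (profile p e) (profile p f) ∨ IsTypeCLeaf (profile p f) (profile p e)) := by
  simp only [typeCGraph, sup_adj, dstar_adj_iff, dstarHalf_adj_iff, kminus_adj_iff,
    ku_adj_iff card_le_three, subset_triple_iff_of_card_eq_two e.2,
    subset_triple_iff_of_card_eq_two f.2, ne_eq, EmbeddingLike.apply_eq_iff_eq, Fin.reduceEq,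
    not_false_eq_true, ← mem_profile]
  by_cases hef : e = f
  · simp [hef]
  obtain ⟨hs, ht, hst⟩ := profile_constraints p hef
  simp only [hef, not_false_eq_true, true_and]
  generalize profile p e = s at *
  generalize profile p f = t at *
  revert s t
  decide

lemma isIntervalGraph_compl_typeCGraph : IsIntervalGraph (typeCGraph (p 0) (p 1) (p 2) (p 3))ᶜ := by
  refine isIntervalGraph_of_nat (intervalLo ∘ profile p) (intervalHi ∘ profile p)
    (fun e => intervalLo_le_intervalHi _) fun e f hef => ?_
  obtain ⟨hs, ht, hst⟩ := profile_constraints p hef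
  rw [compl_adj, typeCGraph_adj_iff, and_iff_right hef, and_iff_right hef]
  exact not_isTypeCLeaf_iff_intervals_meet _ _ hs ht hst

set_option synthInstance.maxSize 1000 in
lemma typeCGraph_eq_sup_starOn : typeCGraph (p 0) (p 1) (p 2) (p 3) =
    starOn (pairVertex p 0 1) ((pairsThrough (p 0) ∪ pairsThrough (p 1)) \ {pairVertex p 0 1}) ⊔
    starOn (pairVertex p 0 3)
      ((pairsThrough (p 0) ∪ pairsThrough (p 3)) \ {pairVertex p 0 1, pairVertex p 0 3}) ⊔
    starOn (pairVertex p 0 2) (insert (pairVertex p 1 2)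
      (pairsThrough (p 0) \ {pairVertex p 0 1, pairVertex p 0 3, pairVertex p 0 2})) ⊔
    starOn (pairVertex p 1 2) {pairVertex p 1 3, pairVertex p 2 3} := by
  ext e f
  rw [typeCGraph_adj_iff]
  simp only [sup_adj, starOn_adj, Set.mem_sdiff, Set.mem_union, Set.mem_insert_iff,
    Set.mem_singleton_iff, mem_pairsThrough, eq_pairVertex_iff, ne_eq, ← mem_profile]
  by_cases hef : e = f
  · simp [hef]
  obtain ⟨hs, ht, hst⟩ := profile_constraints p hef
  simp only [hef, not_false_eq_true, true_and]
  generalize profile p e = s at *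
  generalize profile p f = t at *
  revert s t
  decide

lemma ncard_edgeSet_typeCGraph :
    (typeCGraph (p 0) (p 1) (p 2) (p 3)).edgeSet.ncard = 5 * (n - 2) := by
  have hn : 4 ≤ n := by simpa using Fintype.card_le_of_embedding p
  rw [typeCGraph_eq_sup_starOn]
  set T₁ := (pairsThrough (p 0) ∪ pairsThrough (p 1)) \ {pairVertex p 0 1}
  set T₂ := (pairsThrough (p 0) ∪ pairsThrough (p 3)) \ {pairVertex p 0 1, pairVertex p 0 3}
  set T₃ := insert (pairVertex p 1 2)
    (pairsThrough (p 0) \ {pairVertex p 0 1, pairVertex p 0 3, pairVertex p 0 2})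
  set T₄ : Set {s : Finset (Fin n) // s.card = 2} := {pairVertex p 1 3, pairVertex p 2 3}
  have h₁ : T₁.ncard = 2 * n - 4 := by
    rw [Set.ncard_sdiff_singleton_of_mem (by simp),
      ncard_pairsThrough_union (p.injective.ne (by decide))]
    omega
  have h₂ : T₂.ncard = 2 * n - 5 := by
    rw [Set.ncard_sdiff (by simp [Set.insert_subset_iff]),
      ncard_pairsThrough_union (p.injective.ne (by decide)),
      Set.ncard_pair ((pairVertex_inj p _ _).not.2 (by decide))]
    omega
  have h₃ : T₃.ncard = n - 3 := by
    rw [Set.ncard_insert_of_notMem (by simp), Set.ncard_sdiff (by simp [Set.insert_subset_iff]),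
      Set.ncard_insert_of_notMem (by simp +decide [pairVertex_inj]),
      Set.ncard_pair ((pairVertex_inj p _ _).not.2 (by decide)), ncard_pairsThrough]
    omega
  have h₄ : T₄.ncard = 2 := Set.ncard_pair ((pairVertex_inj p _ _).not.2 (by decide))
  set S₁ := starOn (pairVertex p 0 1) T₁
  set S₂ := starOn (pairVertex p 0 3) T₂
  set S₃ := starOn (pairVertex p 0 2) T₃
  set S₄ := starOn (pairVertex p 1 2) T₄
  have d₂ : Disjoint S₁.edgeSet S₂.edgeSet := by
    apply disjoint_edgeSet_starOn <;> simp +decide [T₂, pairVertex_inj]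
  have d₃ : Disjoint (S₁ ⊔ S₂).edgeSet S₃.edgeSet := by
    rw [edgeSet_sup, Set.disjoint_union_left]
    constructor <;> apply disjoint_edgeSet_starOn <;> simp +decide [T₃, pairVertex_inj]
  have d₄ : Disjoint (S₁ ⊔ S₂ ⊔ S₃).edgeSet S₄.edgeSet := by
    rw [edgeSet_sup, edgeSet_sup, Set.disjoint_union_left, Set.disjoint_union_left]
    refine ⟨⟨?_, ?_⟩, ?_⟩ <;> apply disjoint_edgeSet_starOn <;> simp +decide [T₄, pairVertex_inj]
  rw [ncard_edgeSet_sup_of_disjoint d₄, ncard_edgeSet_sup_of_disjoint d₃,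
    ncard_edgeSet_sup_of_disjoint d₂, ncard_edgeSet_starOn (by simp [T₁]),
    ncard_edgeSet_starOn (by simp [T₂]), ncard_edgeSet_starOn (by simp +decide [T₃, pairVertex_inj]),
    ncard_edgeSet_starOn (by simp +decide [T₄, pairVertex_inj]), h₁, h₂, h₃, h₄]
  omega

end TypeC

theorem type_c_interval_order_general (n : ℕ) (a b c d : Fin n)
    (hdist : ([a, b, c, d] : List (Fin n)).Nodup) :
    IsIntervalGraph (Dstar a b ⊔ Dstar a d ⊔ DstarHalf a c ⊔ KU {a, b, c} ⊔ KU {a, b, d} ⊔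
      Kminus a d c ⊔ Kminus b c d)ᶜ ∧
    (Dstar a b ⊔ Dstar a d ⊔ DstarHalf a c ⊔ KU {a, b, c} ⊔ KU {a, b, d} ⊔
      Kminus a d c ⊔ Kminus b c d).edgeSet.ncard = 5 * (n - 2) := by
  let p : Fin 4 ↪ Fin n := ⟨![a, b, c, d], List.nodup_ofFn.1 hdist⟩
  exact ⟨isIntervalGraph_compl_typeCGraph p, ncard_edgeSet_typeCGraph p⟩

/-- The subgraph of `L(K_n)` with edge set `F_{a,b,c,d}` is an interval-order graph with
`5(n-2)` edges. -/
theorem type_c_interval_order (n : ℕ) (hn : 5 ≤ n) (a b c d : Fin n)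
    (hdist : ([a, b, c, d] : List (Fin n)).Nodup) :
    IsIntervalGraph (Dstar a b ⊔ Dstar a d ⊔ DstarHalf a c ⊔ KU {a, b, c} ⊔ KU {a, b, d} ⊔
      Kminus a d c ⊔ Kminus b c d)ᶜ ∧
    (Dstar a b ⊔ Dstar a d ⊔ DstarHalf a c ⊔ KU {a, b, c} ⊔ KU {a, b, d} ⊔
      Kminus a d c ⊔ Kminus b c d).edgeSet.ncard = 5 * (n - 2) :=
  type_c_interval_order_general n a b c d hdist
end
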